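/- Let (M, μ) be a probability space, 𝒢 a sub-σ-algebra, and A ∈ L²(μ). Suppose h₁, …, h_N ∈ L²(μ) are 𝒢-measurable with invertible Gram matrix G_{ij} = ⟨h_i, h_j⟩, and suppose A = Σ_{i=1}^N c_i h_i for functions c_i ∈ L∞(μ) whose conditional expectations E[c_i|𝒢] are a.e. constant. Then ‖E[A|𝒢]‖² = Σ_{i,j} ⟨A, h_i⟩ (G⁻¹)_{ij} ⟨A, h_j⟩. -/

import Mathlib

/-!
Let `r i` be the a.e. value of `E[c i|𝒢]`. Pulling the `𝒢`-measurable `h i` out of the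
conditional expectation gives `E[A|𝒢] = ∑ r i h i`. Since `h j` is `𝒢`-measurable,
`⟪A, h j⟫ = ⟪E[A|𝒢], h j⟫ = (r ᵥ* G) j`, and likewise `‖E[A|𝒢]‖² = ∑ r j ⟪A, h j⟫`.
For `b = r ᵥ* G` the quadratic form collapses: `b ⬝ G⁻¹ b = (r G G⁻¹) ⬝ b = r ⬝ b`.
-/

open MeasureTheory Matrix

theorem vecMul_dotProduct_inv_mulVec_vecMul {n R : Type*} [Fintype n] [DecidableEq n] [CommRing R]
    {G : Matrix n n R} (hG : IsUnit G.det) (r : n → R) :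
    r ᵥ* G ⬝ᵥ G⁻¹ *ᵥ (r ᵥ* G) = r ⬝ᵥ r ᵥ* G := by
  rw [dotProduct_mulVec, vecMul_vecMul, mul_nonsing_inv G hG, vecMul_one]

section Integration

variable {Ω ι : Type*} {m m0 : MeasurableSpace Ω} {μ : Measure Ω} [Fintype ι]

theorem integral_sum_const_mul_mul (r : ι → ℝ) {f : ι → Ω → ℝ} {g : Ω → ℝ}
    (hfg : ∀ i, Integrable (fun x => f i x * g x) μ) :
    ∫ x, (∑ i, r i * f i x) * g x ∂μ = ∑ i, r i * ∫ x, f i x * g x ∂μ := by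
  simp_rw [Finset.sum_mul, mul_assoc]
  rw [integral_finsetSum _ fun i _ => (hfg i).const_mul (r i)]
  simp_rw [integral_const_mul]

theorem integral_sq_eq_sum_of_ae_eq_sum {Y : Ω → ℝ} {r : ι → ℝ} {f : ι → Ω → ℝ}
    (hY : Y =ᵐ[μ] fun x => ∑ i, r i * f i x) (hYf : ∀ i, Integrable (fun x => Y x * f i x) μ) :
    ∫ x, Y x ^ 2 ∂μ = ∑ i, r i * ∫ x, Y x * f i x ∂μ :=
  calc ∫ x, Y x ^ 2 ∂μ = ∫ x, (∑ i, r i * f i x) * Y x ∂μ :=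
        integral_congr_ae (by filter_upwards [hY] with x hx; rw [sq, ← hx])
    _ = ∑ i, r i * ∫ x, Y x * f i x ∂μ := by
        rw [integral_sum_const_mul_mul r fun i => (hYf i).congr (.of_forall fun x => mul_comm _ _)]
        simp_rw [mul_comm (f _ _)]

theorem condExp_sum_mul_of_stronglyMeasurable_right {c h : ι → Ω → ℝ}
    (hh : ∀ i, StronglyMeasurable[m] (h i)) (hch : ∀ i, Integrable (c i * h i) μ)
    (hc : ∀ i, Integrable (c i) μ) :
    μ[fun x => ∑ i, c i x * h i x | m] =ᵐ[μ] fun x => ∑ i, μ[c i | m] x * h i x := by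
  have hsum : (fun x => ∑ i, c i x * h i x) = ∑ i, c i * h i := by
    ext x
    simp
  rw [hsum]
  filter_upwards [condExp_finsetSum (s := Finset.univ) (fun i _ => hch i) m,
    ae_all_iff.2 fun i => condExp_mul_of_stronglyMeasurable_right (m := m) (hh i) (hch i) (hc i)]
    with x hsum_x hmul_x
  simp [hsum_x, hmul_x]

theorem integrable_condExp_mul_of_stronglyMeasurable_right {f g : Ω → ℝ}
    (hg : StronglyMeasurable[m] g) (hfg : Integrable (f * g) μ) (hf : Integrable f μ) :
    Integrable (fun x => μ[f | m] x * g x) μ :=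
  integrable_condExp.congr (condExp_mul_of_stronglyMeasurable_right hg hfg hf)

theorem integral_condExp_mul_of_stronglyMeasurable_right (hm : m ≤ m0)
    [SigmaFinite (μ.trim hm)] {f g : Ω → ℝ}
    (hg : StronglyMeasurable[m] g) (hfg : Integrable (f * g) μ) (hf : Integrable f μ) :
    ∫ x, μ[f | m] x * g x ∂μ = ∫ x, f x * g x ∂μ :=
  calc ∫ x, μ[f | m] x * g x ∂μ = ∫ x, μ[f * g | m] x ∂μ :=
        integral_congr_ae (condExp_mul_of_stronglyMeasurable_right hg hfg hf).symm
    _ = ∫ x, f x * g x ∂μ := integral_condExp hm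

end Integration

/-- Saturation of the generalized Mazur bound via conditional expectation: if
`A = Σ cᵢ hᵢ` with `𝒢`-measurable `hᵢ ∈ L²` having invertible Gram matrix `G`, and the
conditional expectations of the bounded coefficients `cᵢ` are a.e. constant, then
`‖E[A|𝒢]‖² = Σᵢⱼ ⟪A, hᵢ⟫ (G⁻¹)ᵢⱼ ⟪A, hⱼ⟫`. -/
theorem stmt_17 {M : Type*} {m0 : MeasurableSpace M} (μ : Measure M) [IsProbabilityMeasure μ]
    (m : MeasurableSpace M) (hm : m ≤ m0)
    {N : ℕ} (h : Fin N → M → ℝ) (hh2 : ∀ i, MemLp (h i) 2 μ)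
    (hhmeas : ∀ i, StronglyMeasurable[m] (h i))
    (G : Matrix (Fin N) (Fin N) ℝ) (hG : ∀ i j, G i j = ∫ x, h i x * h j x ∂μ)
    (hGinv : IsUnit G.det)
    (c : Fin N → M → ℝ) (hc : ∀ i, MemLp (c i) ⊤ μ)
    (hcconst : ∀ i, ∃ r : ℝ, μ[c i|m] =ᵐ[μ] fun _ => r)
    (A : M → ℝ) (hA : A = fun x => ∑ i, c i x * h i x) :
    ∫ x, ((μ[A|m]) x) ^ 2 ∂μ =
      ∑ i, ∑ j, (∫ x, A x * h i x ∂μ) * G⁻¹ i j * (∫ x, A x * h j x ∂μ) := by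
  choose r hr using hcconst
  have hch : ∀ i, MemLp (c i * h i) 2 μ := fun i => (hh2 i).mul (hc i)
  have hA2 : MemLp A 2 μ := hA ▸ memLp_finsetSum Finset.univ fun i _ => hch i
  have hY : μ[A|m] =ᵐ[μ] fun x => ∑ i, r i * h i x := by
    rw [hA]
    filter_upwards [condExp_sum_mul_of_stronglyMeasurable_right hhmeas
      (fun i => (hch i).integrable one_le_two) fun i => (hc i).integrable le_top,
      ae_all_iff.2 hr] with x hsum_x hr_x
    simp [hsum_x, hr_x]
  have hA1 : Integrable A μ := hA2.integrable one_le_two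
  have hAh : ∀ j, Integrable (A * h j) μ := fun j => hA2.integrable_mul (hh2 j)
  have hYh : ∀ j, ∫ x, μ[A|m] x * h j x ∂μ = (r ᵥ* G) j := fun j =>
    calc ∫ x, μ[A|m] x * h j x ∂μ = ∫ x, (∑ i, r i * h i x) * h j x ∂μ :=
          integral_congr_ae (by filter_upwards [hY] with x hx; rw [hx])
      _ = (r ᵥ* G) j := by
          rw [integral_sum_const_mul_mul r fun i => (hh2 i).integrable_mul (hh2 j)]
          simp [vecMul, dotProduct, hG]
  have hb : ∀ j, ∫ x, A x * h j x ∂μ = (r ᵥ* G) j := fun j =>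
    (integral_condExp_mul_of_stronglyMeasurable_right hm (hhmeas j) (hAh j) hA1).symm.trans (hYh j)
  have hnorm : ∫ x, μ[A|m] x ^ 2 ∂μ = r ⬝ᵥ r ᵥ* G := by
    rw [integral_sq_eq_sum_of_ae_eq_sum hY fun j =>
      integrable_condExp_mul_of_stronglyMeasurable_right (hhmeas j) (hAh j) hA1]
    simp_rw [hYh]
    rfl
  rw [hnorm, ← vecMul_dotProduct_inv_mulVec_vecMul hGinv r]
  simp_rw [hb, dot_mulVec_eq_sum_sum]
  exact Finset.sum_comm
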